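/- Let V be a finite-dimensional complex inner product space with four square-zero operators Q⁺₁, Q⁻₁, Q⁺₂, Q⁻₂ such that the pairs (Qᵅ₁) and (Qᵅ₂) each satisfy the Hodge relations [Qᵅₐ, (Qᵝₐ)†] = δᵅᵝ Δₐ, all operators with different subscripts a anticommute, and [Qᵅ₁, (Qᵝ₂)†] = 0. Suppose the Q⁻₂Q⁺₂ lemma holds on V. Then the induced operators Q⁻₂*, Q⁺₂* on H(V, Q⁺₁) := ker Q⁺₁ / im Q⁺₁ satisfy the Q⁻Q⁺ lemma: any class [x] with Q⁻₂*[x] = Q⁺₂*[x] = 0 that lies in the image of Q⁻₂* or Q⁺₂* lies in the image of Q⁻₂*Q⁺₂*. -/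

import Mathlib

/-! Hodge theory for `Q := Q⁺₁` with Laplacian `Δ := Q Q† + Q† Q`: a `Q`-closed vector is a
harmonic vector (`Q h = Q† h = 0`) plus a `Q`-exact one, and harmonic vectors are orthogonal
to the images of `Q` and of `Δ`. The `Q^±₂` anticommute with `Q` and `Q†`, hence commute with
`Δ` and preserve harmonic vectors. The hypotheses on a class therefore become honest equations
for its harmonic representative `h`: `Q^±₂ h = 0` and `h ∈ im Q^±₂`. The `Q⁻₂Q⁺₂` lemma on `V`
gives `h = Q⁻₂Q⁺₂ y`, and replacing `y` by its harmonic part keeps this equation while making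
`y` closed. -/

open LinearMap (adjoint)

theorem Commute.apply_mem_ker {R M : Type*} [Semiring R] [AddCommMonoid M] [Module R M]
    {D S : Module.End R M} (hDS : Commute D S) {k : M} (hk : k ∈ LinearMap.ker D) :
    S k ∈ LinearMap.ker D := by
  rw [LinearMap.mem_ker, ← Module.End.mul_apply, hDS.eq, Module.End.mul_apply,
    LinearMap.mem_ker.1 hk, map_zero]

section

open LinearMap Submodule

variable {𝕜 V : Type*} [RCLike 𝕜] [NormedAddCommGroup V] [InnerProductSpace 𝕜 V]
  [FiniteDimensional 𝕜 V]

theorem LinearMap.IsSymmetric.exists_mem_ker_eq_apply {D S : V →ₗ[𝕜] V} (hD : D.IsSymmetric)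
    (hDS : Commute D S) {h x : V} (hh : h ∈ ker D) (hx : h = S x) :
    ∃ k ∈ ker D, h = S k := by
  obtain ⟨k, hk, r, hr, rfl⟩ := (ker D).exists_add_mem_mem_orthogonal x
  rw [← hD.orthogonal_range, orthogonal_orthogonal] at hr
  obtain ⟨w, rfl⟩ := hr
  refine ⟨k, hk, sub_eq_zero.1 (disjoint_def.1 (ker D).orthogonal_disjoint _
    (sub_mem hh (hDS.apply_mem_ker hk)) ?_)⟩
  rw [← hD.orthogonal_range, orthogonal_orthogonal, hx, map_add, add_sub_cancel_left,
    ← Module.End.mul_apply, ← hDS.eq]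
  exact mem_range_self _ _

noncomputable def hodgeLaplacian (Q : V →ₗ[𝕜] V) : V →ₗ[𝕜] V :=
  Q ∘ₗ adjoint Q + adjoint Q ∘ₗ Q

theorem isSymmetric_hodgeLaplacian (Q : V →ₗ[𝕜] V) : (hodgeLaplacian Q).IsSymmetric := by
  have h := (isSymmetric_adjoint_mul_self (adjoint Q)).add (isSymmetric_adjoint_mul_self Q)
  rwa [adjoint_adjoint] at h

theorem mem_ker_hodgeLaplacian {Q : V →ₗ[𝕜] V} {v : V} :
    v ∈ ker (hodgeLaplacian Q) ↔ Q v = 0 ∧ adjoint Q v = 0 := by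
  refine ⟨fun hv => ?_, fun ⟨h₁, h₂⟩ => by simp [hodgeLaplacian, h₁, h₂]⟩
  have key : ‖adjoint Q v‖ ^ 2 + ‖Q v‖ ^ 2 = 0 := by
    have h := congrArg (inner 𝕜 · v) (mem_ker.1 hv)
    rw [hodgeLaplacian, LinearMap.add_apply, comp_apply, comp_apply, inner_add_left,
      ← adjoint_inner_right Q (adjoint Q v) v, adjoint_inner_left Q v (Q v), inner_zero_left,
      inner_self_eq_norm_sq_to_K, inner_self_eq_norm_sq_to_K] at h
    exact_mod_cast h
  obtain ⟨h₁, h₂⟩ := (add_eq_zero_iff_of_nonneg (by positivity) (by positivity)).1 key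
  exact ⟨by simpa using h₂, by simpa using h₁⟩

theorem eq_zero_of_mem_ker_hodgeLaplacian_of_mem_range {Q : V →ₗ[𝕜] V} {h : V}
    (hh : h ∈ ker (hodgeLaplacian Q)) (hQ : h ∈ range Q) : h = 0 := by
  obtain ⟨a, rfl⟩ := hQ
  rw [← inner_self_eq_zero (𝕜 := 𝕜), ← adjoint_inner_right, (mem_ker_hodgeLaplacian.1 hh).2,
    inner_zero_right]

theorem exists_mem_ker_hodgeLaplacian_add {Q : V →ₗ[𝕜] V} (hQ : Q ∘ₗ Q = 0) {x : V}
    (hx : Q x = 0) : ∃ h ∈ ker (hodgeLaplacian Q), ∃ c, x = h + Q c := by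
  obtain ⟨r, ⟨c, rfl⟩, h, hh, hx'⟩ := (range Q).exists_add_mem_mem_orthogonal x
  rw [orthogonal_range] at hh
  refine ⟨h, mem_ker_hodgeLaplacian.2 ⟨?_, hh⟩, c, by rw [hx', add_comm]⟩
  rwa [hx', map_add, ← comp_apply, hQ, LinearMap.zero_apply, zero_add] at hx

theorem adjoint_comp_add_comp_adjoint_eq_zero {Q T : V →ₗ[𝕜] V}
    (h : Q ∘ₗ adjoint T + adjoint T ∘ₗ Q = 0) :
    adjoint Q ∘ₗ T + T ∘ₗ adjoint Q = 0 := by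
  simpa [adjoint_comp, add_comm] using congrArg adjoint h

theorem commute_hodgeLaplacian_of_anticomm {Q T : V →ₗ[𝕜] V} (hT : Q ∘ₗ T + T ∘ₗ Q = 0)
    (hT' : adjoint Q ∘ₗ T + T ∘ₗ adjoint Q = 0) : Commute (hodgeLaplacian Q) T := by
  have e₁ : Q * T = -(T * Q) := eq_neg_of_add_eq_zero_left hT
  have e₂ : adjoint Q * T = -(T * adjoint Q) := eq_neg_of_add_eq_zero_left hT'
  show (Q * adjoint Q + adjoint Q * Q) * T = T * (Q * adjoint Q + adjoint Q * Q)
  rw [add_mul, mul_add, mul_assoc, e₂, mul_assoc, e₁, mul_neg, mul_neg, ← mul_assoc, e₁,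
    ← mul_assoc, e₂, neg_mul, neg_mul, neg_neg, neg_neg, mul_assoc, mul_assoc]

theorem apply_eq_zero_of_anticomm {Q T : V →ₗ[𝕜] V} (hQT : Q ∘ₗ T + T ∘ₗ Q = 0)
    (hΔT : Commute (hodgeLaplacian Q) T) {h c a : V} (hh : h ∈ ker (hodgeLaplacian Q))
    (ha : T (h + Q c) = Q a) : T h = 0 := by
  refine eq_zero_of_mem_ker_hodgeLaplacian_of_mem_range (hΔT.apply_mem_ker hh) ⟨a + T c, ?_⟩
  have e : Q (T c) + T (Q c) = 0 := congrArg (· c) hQT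
  rw [map_add] at ha ⊢
  linear_combination (norm := module) e - ha

theorem exists_mem_ker_hodgeLaplacian_eq_apply {Q T : V →ₗ[𝕜] V} (hQ : Q ∘ₗ Q = 0)
    (hQT : Q ∘ₗ T + T ∘ₗ Q = 0) (hΔT : Commute (hodgeLaplacian Q) T) {h c x b : V}
    (hh : h ∈ ker (hodgeLaplacian Q)) (hx : Q x = 0) (hb : h + Q c = T x + Q b) :
    ∃ k ∈ ker (hodgeLaplacian Q), h = T k := by
  obtain ⟨k, hk, c', rfl⟩ := exists_mem_ker_hodgeLaplacian_add hQ hx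
  refine ⟨k, hk, sub_eq_zero.1 (eq_zero_of_mem_ker_hodgeLaplacian_of_mem_range
    (sub_mem hh (hΔT.apply_mem_ker hk)) ⟨b - c - T c', ?_⟩)⟩
  have e : Q (T c') + T (Q c') = 0 := congrArg (· c') hQT
  rw [map_add] at hb
  rw [map_sub, map_sub]
  linear_combination (norm := module) -hb - e

end

-- A class of `H(V, Q⁺₁)` is given by a `Q⁺₁`-closed representative; two representatives
-- define the same class when they differ by an element of `im Q⁺₁`.
theorem stmt11_general {V : Type*} [NormedAddCommGroup V] [InnerProductSpace ℂ V]
    [FiniteDimensional ℂ V]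
    (Qp1 Qp2 Qm2 : V →ₗ[ℂ] V)
    (hp1 : Qp1 ∘ₗ Qp1 = 0)
    (hanti12pp : Qp1 ∘ₗ Qp2 + Qp2 ∘ₗ Qp1 = 0)
    (hanti12pm : Qp1 ∘ₗ Qm2 + Qm2 ∘ₗ Qp1 = 0)
    (hcross12 : Qp1 ∘ₗ adjoint Qp2 + adjoint Qp2 ∘ₗ Qp1 = 0)
    (hcross12' : Qp1 ∘ₗ adjoint Qm2 + adjoint Qm2 ∘ₗ Qp1 = 0)
    (hddc2 : ∀ x : V, Qm2 x = 0 → Qp2 x = 0 →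
      ((∃ x', x = Qm2 x') ∨ (∃ x', x = Qp2 x')) → ∃ xt, x = Qm2 (Qp2 xt)) :
    ∀ x : V, Qp1 x = 0 →
      (∃ a : V, Qm2 x = Qp1 a) → (∃ a : V, Qp2 x = Qp1 a) →
      ((∃ x' b : V, Qp1 x' = 0 ∧ x = Qm2 x' + Qp1 b) ∨
        (∃ x' b : V, Qp1 x' = 0 ∧ x = Qp2 x' + Qp1 b)) →
      ∃ xt b : V, Qp1 xt = 0 ∧ x = Qm2 (Qp2 xt) + Qp1 b := by
  intro x hx ⟨am, ham⟩ ⟨ap, hap⟩ him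
  obtain ⟨h, hh, c, rfl⟩ := exists_mem_ker_hodgeLaplacian_add hp1 hx
  have hΔp := commute_hodgeLaplacian_of_anticomm hanti12pp
    (adjoint_comp_add_comp_adjoint_eq_zero hcross12)
  have hΔm := commute_hodgeLaplacian_of_anticomm hanti12pm
    (adjoint_comp_add_comp_adjoint_eq_zero hcross12')
  have him_h : (∃ x', h = Qm2 x') ∨ (∃ x', h = Qp2 x') := by
    rcases him with ⟨x', b, hx', hb⟩ | ⟨x', b, hx', hb⟩
    · obtain ⟨k, -, hk⟩ := exists_mem_ker_hodgeLaplacian_eq_apply hp1 hanti12pm hΔm hh hx' hb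
      exact .inl ⟨k, hk⟩
    · obtain ⟨k, -, hk⟩ := exists_mem_ker_hodgeLaplacian_eq_apply hp1 hanti12pp hΔp hh hx' hb
      exact .inr ⟨k, hk⟩
  obtain ⟨y, hy⟩ := hddc2 h (apply_eq_zero_of_anticomm hanti12pm hΔm hh ham)
    (apply_eq_zero_of_anticomm hanti12pp hΔp hh hap) him_h
  obtain ⟨k, hk, rfl⟩ :=
    (isSymmetric_hodgeLaplacian Qp1).exists_mem_ker_eq_apply (hΔm.mul_right hΔp) hh hy
  exact ⟨k, c, (mem_ker_hodgeLaplacian.1 hk).1, rfl⟩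

/-- Iterated `Q⁻Q⁺` lemma: if `V` carries two compatible Kähler packages (indexed
by `a = 1, 2`) and the `Q⁻₂Q⁺₂` lemma holds on `V`, then the operators induced by
`Q⁻₂, Q⁺₂` on the cohomology `H(V, Q⁺₁) = ker Q⁺₁ / im Q⁺₁` satisfy the `Q⁻Q⁺`
lemma, stated here at the level of representatives: classes are represented by
`Q⁺₁`-closed vectors and equality of classes means difference in `im Q⁺₁`. -/
theorem stmt11 {V : Type*} [NormedAddCommGroup V] [InnerProductSpace ℂ V]
    [FiniteDimensional ℂ V]
    (Qp1 Qm1 Qp2 Qm2 : V →ₗ[ℂ] V)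
    (hp1 : Qp1 ∘ₗ Qp1 = 0) (hm1 : Qm1 ∘ₗ Qm1 = 0)
    (hp2 : Qp2 ∘ₗ Qp2 = 0) (hm2 : Qm2 ∘ₗ Qm2 = 0)
    (hanti1 : Qp1 ∘ₗ Qm1 + Qm1 ∘ₗ Qp1 = 0)
    (hanti2 : Qp2 ∘ₗ Qm2 + Qm2 ∘ₗ Qp2 = 0)
    (hanti12pp : Qp1 ∘ₗ Qp2 + Qp2 ∘ₗ Qp1 = 0)
    (hanti12pm : Qp1 ∘ₗ Qm2 + Qm2 ∘ₗ Qp1 = 0)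
    (hanti12mp : Qm1 ∘ₗ Qp2 + Qp2 ∘ₗ Qm1 = 0)
    (hanti12mm : Qm1 ∘ₗ Qm2 + Qm2 ∘ₗ Qm1 = 0)
    (Δ1 Δ2 : V →ₗ[ℂ] V)
    (hΔ1p : Qp1 ∘ₗ adjoint Qp1 + adjoint Qp1 ∘ₗ Qp1 = Δ1)
    (hΔ1m : Qm1 ∘ₗ adjoint Qm1 + adjoint Qm1 ∘ₗ Qm1 = Δ1)
    (hcross1 : Qp1 ∘ₗ adjoint Qm1 + adjoint Qm1 ∘ₗ Qp1 = 0)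
    (hΔ2p : Qp2 ∘ₗ adjoint Qp2 + adjoint Qp2 ∘ₗ Qp2 = Δ2)
    (hΔ2m : Qm2 ∘ₗ adjoint Qm2 + adjoint Qm2 ∘ₗ Qm2 = Δ2)
    (hcross2 : Qp2 ∘ₗ adjoint Qm2 + adjoint Qm2 ∘ₗ Qp2 = 0)
    (hcross12 : Qp1 ∘ₗ adjoint Qp2 + adjoint Qp2 ∘ₗ Qp1 = 0)
    (hcross12' : Qp1 ∘ₗ adjoint Qm2 + adjoint Qm2 ∘ₗ Qp1 = 0)
    (hcross21 : Qm1 ∘ₗ adjoint Qp2 + adjoint Qp2 ∘ₗ Qm1 = 0)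
    (hcross21' : Qm1 ∘ₗ adjoint Qm2 + adjoint Qm2 ∘ₗ Qm1 = 0)
    (hddc2 : ∀ x : V, Qm2 x = 0 → Qp2 x = 0 →
      ((∃ x', x = Qm2 x') ∨ (∃ x', x = Qp2 x')) → ∃ xt, x = Qm2 (Qp2 xt)) :
    ∀ x : V, Qp1 x = 0 →
      (∃ a : V, Qm2 x = Qp1 a) → (∃ a : V, Qp2 x = Qp1 a) →
      ((∃ x' b : V, Qp1 x' = 0 ∧ x = Qm2 x' + Qp1 b) ∨
        (∃ x' b : V, Qp1 x' = 0 ∧ x = Qp2 x' + Qp1 b)) →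
      ∃ xt b : V, Qp1 xt = 0 ∧ x = Qm2 (Qp2 xt) + Qp1 b :=
  stmt11_general Qp1 Qp2 Qm2 hp1 hanti12pp hanti12pm hcross12 hcross12' hddc2
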